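/- arXiv:1405.7821 — 6 statements merged into one kernel-verified Lean document; each statement's English description precedes it below -/
import Mathlib

section
/- Let Q and A be real 2×2 matrices and let σ be a real 2×2 matrix, with Q invertible. If Q satisfies the Riccati equation 2·Q·σ·Q + Q·A + Aᵀ·Q = 0, then trace(A + σ·Q) = 0. -/
/-!
Multiplying the Riccati equation on the left by `Q⁻¹` and taking traces gives
`2 tr(σQ) + tr A + tr(Q⁻¹AᵀQ) = 0`; the last term is a conjugate of `Aᵀ`, so its trace is
`tr A`, and the equation reads `2 tr(A + σQ) = 0`.
-/

open Matrix

theorem Matrix.trace_inv_mul_riccati {n R : Type*} [Fintype n] [DecidableEq n] [CommRing R]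
    {Q : Matrix n n R} (hQ : IsUnit Q) (A σ : Matrix n n R) :
    (Q⁻¹ * ((2 : R) • (Q * σ * Q) + Q * A + Aᵀ * Q)).trace = 2 * (A + σ * Q).trace := by
  have hdet : IsUnit Q.det := (isUnit_iff_isUnit_det Q).mp hQ
  rw [Matrix.mul_add, Matrix.mul_add, Matrix.mul_smul, mul_assoc Q,
    nonsing_inv_mul_cancel_left Q (σ * Q) hdet, nonsing_inv_mul_cancel_left Q A hdet, ← mul_assoc,
    trace_add, trace_add, trace_smul, trace_conj' hQ, trace_transpose, trace_add, smul_eq_mul]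
  ring

/-- If an invertible 2×2 real matrix `Q` satisfies the Riccati equation
`2·Q·σ·Q + Q·A + Aᵀ·Q = 0`, then `trace (A + σ·Q) = 0`. -/
theorem riccati_trace_eq_zero (Q A σ : Matrix (Fin 2) (Fin 2) ℝ)
    (hQ : IsUnit Q)
    (hric : (2 : ℝ) • (Q * σ * Q) + Q * A + A.transpose * Q = 0) :
    (A + σ * Q).trace = 0 := by
  have h := trace_inv_mul_riccati hQ A σ
  rw [hric, Matrix.mul_zero, trace_zero] at h
  linarith
end

section
/- Let S > 0, let B : ℝ → ℝ be continuous and S-periodic with B(s) > 0 for all s, let M : ℝ → Matrix (Fin 2) (Fin 2) ℝ be such that M(s) is positive definite for every s, let v : ℝ → (Fin 2 → ℝ) be continuous, and let f : ℝ → ℝ be continuously differentiable and S-periodic. If for all s one has (v s) ⬝ (M s).mulVec (v s) + B(s) · f'(s) = 0, then f is constant, f'(s) = 0 for all s, and v(s) = 0 for all s. -/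
/-!
The quadratic form is nonnegative and `B > 0`, so the equation forces `f' ≤ 0`: `f` is antitone.
An antitone periodic function is constant, hence `f' = 0`, the quadratic form vanishes, and
positive definiteness gives `v = 0`.
-/

theorem Function.Periodic.eq_of_antitone {α β : Type*} [AddCommGroup α] [LinearOrder α]
    [IsOrderedAddMonoid α] [Archimedean α] [PartialOrder β] {f : α → β} {c : α}
    (hf : Function.Periodic f c) (hc : 0 < c) (hanti : Antitone f) (x y : α) : f x = f y := by
  have hle : ∀ a b, f b ≤ f a := fun a b => by
    obtain ⟨n, hn⟩ := Archimedean.arch (a - b) hc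
    calc f b = f (b + n • c) := (hf.nsmul n b).symm
      _ ≤ f a := hanti (by rw [← sub_le_iff_le_add']; exact hn)
  exact le_antisymm (hle y x) (hle x y)

theorem eikonal_constant_on_limit_cycle_general
    (S : ℝ) (hS : 0 < S)
    (B : ℝ → ℝ)
    (hBpos : ∀ s, 0 < B s)
    (M : ℝ → Matrix (Fin 2) (Fin 2) ℝ) (hM : ∀ s, (M s).PosDef)
    (v : ℝ → Fin 2 → ℝ)
    (f : ℝ → ℝ) (hf : ContDiff ℝ 1 f) (hfper : Function.Periodic f S)
    (heq : ∀ s, dotProduct (v s) ((M s).mulVec (v s)) + B s * deriv f s = 0) :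
    (∀ s t, f s = f t) ∧ (∀ s, deriv f s = 0) ∧ (∀ s, v s = 0) := by
  have hquad_nonneg : ∀ s, 0 ≤ dotProduct (v s) ((M s).mulVec (v s)) := fun s => by
    simpa only [star_trivial] using (hM s).posSemidef.dotProduct_mulVec_nonneg (v s)
  have hderiv_nonpos : ∀ s, deriv f s ≤ 0 := fun s =>
    nonpos_of_mul_nonpos_right (by linarith [heq s, hquad_nonneg s]) (hBpos s)
  have hconst : ∀ s t, f s = f t := hfper.eq_of_antitone hS
    (antitone_of_deriv_nonpos (hf.differentiable one_ne_zero) hderiv_nonpos)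
  have hderiv_zero : ∀ s, deriv f s = 0 := fun s => by
    rw [show f = fun _ => f 0 from funext (hconst · 0)]
    exact deriv_const s _
  refine ⟨hconst, hderiv_zero, fun s => ?_⟩
  have hquad_zero : dotProduct (v s) ((M s).mulVec (v s)) = 0 := by
    simpa [hderiv_zero s] using heq s
  by_contra hne
  have hquad_pos := (hM s).dotProduct_mulVec_pos hne
  rw [star_trivial, hquad_zero] at hquad_pos
  exact hquad_pos.false

/-- If `v(s)ᵀ M(s) v(s) + B(s) f'(s) = 0` with `B > 0`, `M(s)` positive
definite and `f` an `S`-periodic `C¹` function, then `f` is constant, `f' ≡ 0` and `v ≡ 0`. -/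
theorem eikonal_constant_on_limit_cycle
    (S : ℝ) (hS : 0 < S)
    (B : ℝ → ℝ) (hBcont : Continuous B) (hBper : Function.Periodic B S)
    (hBpos : ∀ s, 0 < B s)
    (M : ℝ → Matrix (Fin 2) (Fin 2) ℝ) (hM : ∀ s, (M s).PosDef)
    (v : ℝ → Fin 2 → ℝ) (hv : Continuous v)
    (f : ℝ → ℝ) (hf : ContDiff ℝ 1 f) (hfper : Function.Periodic f S)
    (heq : ∀ s, dotProduct (v s) ((M s).mulVec (v s)) + B s * deriv f s = 0) :
    (∀ s t, f s = f t) ∧ (∀ s, deriv f s = 0) ∧ (∀ s, v s = 0) :=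
  eikonal_constant_on_limit_cycle_general S hS B hBpos M hM v f hf hfper heq
end

section
/- Let S > 0 and let σ, a⁰, φ, B, ξ : ℝ → ℝ with B(s) > 0, ξ continuously differentiable, φ(s) = −ξ(s)² for all s, and suppose ξ satisfies the Bernoulli-type equation σ(s)·ξ(s)³ + [a⁰(s) + 2σ(s)φ(s)]·ξ(s) + B(s)·ξ'(s) = 0 for all s. Define F : ℝ → ℝ by F(x) = −√(2/π) · ∫₀^x exp(−z²/2) dz and Q(ζ, s) = F(ξ(s)·ζ). Then Q satisfies the boundary layer PDE σ(s)·∂²Q/∂ζ²(ζ,s) − ζ·[a⁰(s) + 2σ(s)φ(s)]·∂Q/∂ζ(ζ,s) − B(s)·∂Q/∂s(ζ,s) = 0 for all ζ ≤ 0 and all s, together with Q(0, s) = 0 and Q(ζ, s) → 1 as ζ → −∞ (for each fixed s with ξ(s) > 0). -/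
/-!
`Q(ζ, s) = F(ξ(s) ζ)` is a similarity solution: since `F'' = -x F'`, applying the boundary
layer operator to `Q` gives `-ζ F'(ξ ζ)` times the left side of the Bernoulli equation for `ξ`,
which vanishes. The boundary values come from `F(0) = 0` and the Gaussian integral
`∫_{-∞}^0 exp(-z²/2) dz = √(π/2)`.
-/

open Filter Topology Real

lemma tendsto_integral_exp_neg_mul_sq_atBot {b : ℝ} (hb : 0 < b) :
    Tendsto (fun x => ∫ z in (0 : ℝ)..x, exp (-b * z ^ 2)) atBot (𝓝 (-(√(π / b) / 2))) := by
  have hIic : ∫ z in Set.Iic (0 : ℝ), exp (-b * z ^ 2) = √(π / b) / 2 := by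
    have hsymm := integral_comp_neg_Iic 0 fun z => exp (-b * z ^ 2)
    simp only [neg_zero, neg_sq] at hsymm
    rw [hsymm, integral_gaussian_Ioi]
  have hlim := MeasureTheory.intervalIntegral_tendsto_integral_Iic (0 : ℝ)
    (integrable_exp_neg_mul_sq hb).integrableOn tendsto_id
  rw [hIic] at hlim
  simpa only [intervalIntegral.integral_symm 0, neg_neg, id] using hlim.neg

theorem boundaryLayerOperator_comp_mul {F F' ξ : ℝ → ℝ} (hF : ∀ x, HasDerivAt F (F' x) x)
    (hF' : ∀ x, HasDerivAt F' (-x * F' x) x) {s : ℝ} (hξ : DifferentiableAt ℝ ξ s)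
    (σ A B ζ : ℝ) :
    σ * deriv (deriv fun ζ' => F (ξ s * ζ')) ζ - ζ * A * deriv (fun ζ' => F (ξ s * ζ')) ζ
        - B * deriv (fun s' => F (ξ s' * ζ)) s
      = -ζ * F' (ξ s * ζ) * (σ * ξ s ^ 3 + A * ξ s + B * deriv ξ s) := by
  have hlin : ∀ ζ : ℝ, HasDerivAt (fun ζ' => ξ s * ζ') (ξ s) ζ := fun _ => hasDerivAt_const_mul _
  have hζ : deriv (fun ζ' => F (ξ s * ζ')) = fun ζ => F' (ξ s * ζ) * ξ s :=
    funext fun ζ => ((hF _).comp ζ (hlin ζ)).deriv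
  have hζζ : deriv (fun ζ => F' (ξ s * ζ) * ξ s) ζ = -(ξ s * ζ) * F' (ξ s * ζ) * ξ s * ξ s :=
    (((hF' _).comp ζ (hlin ζ)).mul_const (ξ s)).deriv
  have hs : deriv (fun s' => F (ξ s' * ζ)) s = F' (ξ s * ζ) * (deriv ξ s * ζ) :=
    ((hF _).comp s (hξ.hasDerivAt.mul_const ζ)).deriv
  rw [hζ, hζζ, hs]
  ring

lemma tendsto_neg_sqrt_two_div_pi_mul_integral_exp_neg_sq_div_two_atBot :
    Tendsto (fun x => -√(2 / π) * ∫ z in (0 : ℝ)..x, exp (-z ^ 2 / 2)) atBot (𝓝 1) := by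
  have hone : -√(2 / π) * -(√(π / (1 / 2)) / 2) = 1 := by
    rw [neg_mul_neg, ← mul_div_assoc, ← sqrt_mul (by positivity),
      show 2 / π * (π / (1 / 2)) = 2 ^ 2 by field_simp, sqrt_sq two_pos.le]
    norm_num
  simp_rw [show ∀ z : ℝ, -z ^ 2 / 2 = -(1 / 2) * z ^ 2 from fun z => by ring]
  simpa only [hone] using
    (tendsto_integral_exp_neg_mul_sq_atBot one_half_pos).const_mul (-√(2 / π))

theorem boundary_layer_solution_forward_general
    (σ a0 φ B ξ : ℝ → ℝ)
    (hξ : ContDiff ℝ 1 ξ)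
    (hbern : ∀ s, σ s * ξ s ^ 3 + (a0 s + 2 * σ s * φ s) * ξ s + B s * deriv ξ s = 0)
    (F : ℝ → ℝ)
    (hF : ∀ x, F x = -Real.sqrt (2 / Real.pi) * ∫ z in (0:ℝ)..x, Real.exp (-z ^ 2 / 2))
    (Q : ℝ → ℝ → ℝ)
    (hQdef : ∀ ζ s, Q ζ s = F (ξ s * ζ)) :
    (∀ ζ ≤ (0:ℝ), ∀ s,
        σ s * deriv (deriv (fun ζ' => Q ζ' s)) ζ
          - ζ * (a0 s + 2 * σ s * φ s) * deriv (fun ζ' => Q ζ' s) ζ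
          - B s * deriv (fun s' => Q ζ s') s = 0) ∧
    (∀ s, Q 0 s = 0) ∧
    (∀ s, 0 < ξ s → Tendsto (fun ζ => Q ζ s) atBot (nhds 1)) := by
  obtain rfl : Q = fun ζ s => F (ξ s * ζ) := funext fun ζ => funext (hQdef ζ)
  obtain rfl : F = fun x => -√(2 / π) * ∫ z in (0:ℝ)..x, exp (-z ^ 2 / 2) := funext hF
  have hgauss : ∀ x, HasDerivAt (fun z => exp (-z ^ 2 / 2)) (-x * exp (-x ^ 2 / 2)) x :=
    fun x => by simpa [neg_div, mul_comm] using ((hasDerivAt_pow 2 x).div_const 2).neg.exp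
  have hF' : ∀ x, HasDerivAt (fun x => -√(2 / π) * ∫ z in (0:ℝ)..x, exp (-z ^ 2 / 2))
      (-√(2 / π) * exp (-x ^ 2 / 2)) x := fun x =>
    ((Continuous.integral_hasStrictDerivAt (by fun_prop) 0 x).hasDerivAt).const_mul _
  have hF'' : ∀ x, HasDerivAt (fun x => -√(2 / π) * exp (-x ^ 2 / 2))
      (-x * (-√(2 / π) * exp (-x ^ 2 / 2))) x := fun x =>
    ((hgauss x).const_mul _).congr_deriv (by ring)
  refine ⟨fun ζ _ s => ?_, fun s => by simp, fun s hs => ?_⟩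
  · rw [boundaryLayerOperator_comp_mul hF' hF'' (hξ.differentiable one_ne_zero s), hbern, mul_zero]
  · exact tendsto_neg_sqrt_two_div_pi_mul_integral_exp_neg_sq_div_two_atBot.comp
      (tendsto_id.const_mul_atBot hs)

/-- `Q(ζ,s) = F(ξ(s)ζ)` with `F(x) = −√(2/π)·∫₀^x exp(−z²/2) dz` and `ξ`
the solution of the Bernoulli-type equation `σξ³ + (a⁰ + 2σφ)ξ + Bξ' = 0` (with `φ = −ξ²`)
satisfies the boundary layer PDE `σ Q_ζζ − ζ(a⁰ + 2σφ) Q_ζ − B Q_s = 0` for `ζ ≤ 0`,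
with `Q(0,s) = 0` and `Q(ζ,s) → 1` as `ζ → −∞` whenever `ξ(s) > 0`. -/
theorem boundary_layer_solution_forward
    (S : ℝ) (hS : 0 < S)
    (σ a0 φ B ξ : ℝ → ℝ)
    (hB : ∀ s, 0 < B s)
    (hξ : ContDiff ℝ 1 ξ)
    (hφ : ∀ s, φ s = -ξ s ^ 2)
    (hbern : ∀ s, σ s * ξ s ^ 3 + (a0 s + 2 * σ s * φ s) * ξ s + B s * deriv ξ s = 0)
    (F : ℝ → ℝ)
    (hF : ∀ x, F x = -Real.sqrt (2 / Real.pi) * ∫ z in (0:ℝ)..x, Real.exp (-z ^ 2 / 2))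
    (Q : ℝ → ℝ → ℝ)
    (hQdef : ∀ ζ s, Q ζ s = F (ξ s * ζ)) :
    (∀ ζ ≤ (0:ℝ), ∀ s,
        σ s * deriv (deriv (fun ζ' => Q ζ' s)) ζ
          - ζ * (a0 s + 2 * σ s * φ s) * deriv (fun ζ' => Q ζ' s) ζ
          - B s * deriv (fun s' => Q ζ s') s = 0) ∧
    (∀ s, Q 0 s = 0) ∧
    (∀ s, 0 < ξ s → Tendsto (fun ζ => Q ζ s) atBot (nhds 1)) :=
  boundary_layer_solution_forward_general σ a0 φ B ξ hξ hbern F hF Q hQdef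
end

section
/- Let σ, a⁰, B, ξ₀ : ℝ → ℝ with B(s) > 0 and ξ₀ continuously differentiable, and suppose ξ₀ satisfies the Bernoulli equation B(s)·ξ₀'(s) + a⁰(s)·ξ₀(s) − σ(s)·ξ₀(s)³ = 0 for all s. Define F(x) = −√(2/π) · ∫₀^x exp(−z²/2) dz and Q(ζ, s) = F(ξ₀(s)·ζ). Then Q satisfies the adjoint boundary layer PDE σ(s)·∂²Q/∂ζ²(ζ,s) + ζ·a⁰(s)·∂Q/∂ζ(ζ,s) + B(s)·∂Q/∂s(ζ,s) = 0 for all ζ and s, together with Q(0,s) = 0. -/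
/-! The profile `F` satisfies `F'' = -x F'`, so for `Q(ζ,s) = F(ξ₀(s)ζ)` every term of the
operator is a multiple of `ζ F'(ξ₀ζ)`: `Q_ζζ = -ξ₀³ζ F'`, `Q_ζ = ξ₀ F'`, `Q_s = ξ₀'ζ F'`.
The combined coefficient `-σξ₀³ + a⁰ξ₀ + Bξ₀'` vanishes by the Bernoulli equation. -/

open Real

section BoundaryLayer

variable {F f : ℝ → ℝ}

lemma hasDerivAt_comp_mul_left (hF : ∀ x, HasDerivAt F (f x) x) (a ζ : ℝ) :
    HasDerivAt (fun ζ => F (a * ζ)) (a * f (a * ζ)) ζ := by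
  have h := (hF (a * ζ)).comp ζ ((hasDerivAt_id' ζ).const_mul a)
  rwa [mul_one, mul_comm] at h

lemma deriv_deriv_comp_mul_left (hF : ∀ x, HasDerivAt F (f x) x)
    (hf : ∀ x, HasDerivAt f (-x * f x) x) (a ζ : ℝ) :
    deriv (deriv fun ζ => F (a * ζ)) ζ = -(a ^ 3 * ζ) * f (a * ζ) := by
  have hderiv : deriv (fun ζ => F (a * ζ)) = fun ζ => a * f (a * ζ) :=
    funext fun ζ => (hasDerivAt_comp_mul_left hF a ζ).deriv
  rw [hderiv, ((hasDerivAt_comp_mul_left hf a ζ).const_mul a).deriv]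
  ring

theorem boundary_layer_pde_of_bernoulli (hF : ∀ x, HasDerivAt F (f x) x)
    (hf : ∀ x, HasDerivAt f (-x * f x) x) {σ a0 B ξ0 : ℝ → ℝ} (hξ0 : Differentiable ℝ ξ0)
    (hbern : ∀ s, B s * deriv ξ0 s + a0 s * ξ0 s - σ s * ξ0 s ^ 3 = 0) (ζ s : ℝ) :
    σ s * deriv (deriv fun ζ' => F (ξ0 s * ζ')) ζ
      + ζ * a0 s * deriv (fun ζ' => F (ξ0 s * ζ')) ζ
      + B s * deriv (fun s' => F (ξ0 s' * ζ)) s = 0 := by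
  have hQs : HasDerivAt (fun s' => F (ξ0 s' * ζ)) (f (ξ0 s * ζ) * (deriv ξ0 s * ζ)) s :=
    (hF _).comp s ((hξ0 s).hasDerivAt.mul_const ζ)
  rw [deriv_deriv_comp_mul_left hF hf, (hasDerivAt_comp_mul_left hF _ ζ).deriv, hQs.deriv]
  linear_combination ζ * f (ξ0 s * ζ) * hbern s

end BoundaryLayer

lemma hasDerivAt_const_mul_integral_exp_neg_sq_div_two (c x : ℝ) :
    HasDerivAt (fun x => c * ∫ z in (0 : ℝ)..x, exp (-z ^ 2 / 2)) (c * exp (-x ^ 2 / 2)) x :=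
  ((Continuous.integral_hasStrictDerivAt (by fun_prop) 0 x).hasDerivAt).const_mul c

lemma hasDerivAt_const_mul_exp_neg_sq_div_two (c x : ℝ) :
    HasDerivAt (fun x => c * exp (-x ^ 2 / 2)) (-x * (c * exp (-x ^ 2 / 2))) x :=
  ((((hasDerivAt_id' x).fun_pow 2).fun_neg.div_const 2).exp.const_mul c).congr_deriv (by ring)

theorem boundary_layer_solution_adjoint_general
    (σ a0 B ξ0 : ℝ → ℝ)
    (hξ0 : ContDiff ℝ 1 ξ0)
    (hbern : ∀ s, B s * deriv ξ0 s + a0 s * ξ0 s - σ s * ξ0 s ^ 3 = 0)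
    (F : ℝ → ℝ)
    (hF : ∀ x, F x = -Real.sqrt (2 / Real.pi) * ∫ z in (0:ℝ)..x, Real.exp (-z ^ 2 / 2))
    (Q : ℝ → ℝ → ℝ)
    (hQdef : ∀ ζ s, Q ζ s = F (ξ0 s * ζ)) :
    (∀ ζ s,
        σ s * deriv (deriv (fun ζ' => Q ζ' s)) ζ
          + ζ * a0 s * deriv (fun ζ' => Q ζ' s) ζ
          + B s * deriv (fun s' => Q ζ s') s = 0) ∧
    (∀ s, Q 0 s = 0) := by
  obtain rfl : Q = fun ζ s => F (ξ0 s * ζ) := funext₂ hQdef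
  obtain rfl := funext hF
  refine ⟨boundary_layer_pde_of_bernoulli (hasDerivAt_const_mul_integral_exp_neg_sq_div_two _)
    (hasDerivAt_const_mul_exp_neg_sq_div_two _) (hξ0.differentiable one_ne_zero) hbern,
    fun s => ?_⟩
  simp

/-- `Q(ζ,s) = F(ξ₀(s)ζ)` with `F(x) = −√(2/π)·∫₀^x exp(−z²/2) dz` and `ξ₀`
the solution of the Bernoulli equation `Bξ₀' + a⁰ξ₀ − σξ₀³ = 0` satisfies the adjoint
boundary layer PDE `σ Q_ζζ + ζ a⁰ Q_ζ + B Q_s = 0`, with `Q(0,s) = 0`. -/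
theorem boundary_layer_solution_adjoint
    (σ a0 B ξ0 : ℝ → ℝ)
    (hB : ∀ s, 0 < B s)
    (hξ0 : ContDiff ℝ 1 ξ0)
    (hbern : ∀ s, B s * deriv ξ0 s + a0 s * ξ0 s - σ s * ξ0 s ^ 3 = 0)
    (F : ℝ → ℝ)
    (hF : ∀ x, F x = -Real.sqrt (2 / Real.pi) * ∫ z in (0:ℝ)..x, Real.exp (-z ^ 2 / 2))
    (Q : ℝ → ℝ → ℝ)
    (hQdef : ∀ ζ s, Q ζ s = F (ξ0 s * ζ)) :
    (∀ ζ s,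
        σ s * deriv (deriv (fun ζ' => Q ζ' s)) ζ
          + ζ * a0 s * deriv (fun ζ' => Q ζ' s) ζ
          + B s * deriv (fun s' => Q ζ s') s = 0) ∧
    (∀ s, Q 0 s = 0) :=
  boundary_layer_solution_adjoint_general σ a0 B ξ0 hξ0 hbern F hF Q hQdef
end

section
/- Let S > 0, let σ, ξ, a⁰, B : ℝ → ℝ be continuous and S-periodic with B(s) > 0, σ(s) > 0, ξ continuously differentiable satisfying B·ξ' + a⁰·ξ − σ·ξ³ = 0, let n be a positive integer and m an integer, and set ω₂ = 2π/∫₀^S ds/B(s), λ_{m,n} = 2n·(ω₂/(2π))·∫₀^S σ(s)ξ(s)²/B(s) ds + i·m·ω₂. Define Q̃(η, s) = exp(−η²/2)·He_{2n−1}(η) · exp(−λ_{m,n}·∫₀ˢ ds'/B(s') + 2n·∫₀ˢ σ(s')ξ(s')²/B(s') ds'), where He_{2n−1} is the probabilists' Hermite polynomial of degree 2n−1. Then Q̃ satisfies the boundary layer eigenvalue equation σ(s)ξ(s)²·∂²Q̃/∂η² + σ(s)ξ(s)²·η·∂Q̃/∂η + B(s)·∂Q̃/∂s = −λ_{m,n}·Q̃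 for all η ∈ ℝ and s ∈ ℝ, together with Q̃(0, s) = 0 for all s, Q̃(η, s) → 0 as η → −∞ for each s, and Q̃(η, s + S) = Q̃(η, s) for all η, s. -/
/-!
Separation of variables. Differentiating `e^{-x²/2} He_k` gives `-e^{-x²/2} He_{k+1}`, so the
Hermite recurrence `He_{k+2} = x He_{k+1} - (k+1) He_k` makes `R = e^{-η²/2} He_{2n-1}` satisfy
`R'' + ηR' = -2n R`; `R` vanishes at `0` because `He_{2n-1}` is odd, and decays like a Gaussian.
The tangential factor is the exponential of a primitive, built so that `B T' = (-λ + 2nσξ²) T`,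
which cancels the normal eigenvalue `-2nσξ²`. Over one period `T` gains the factor
`exp(-λ∫₀^S 1/B + 2n∫₀^S σξ²/B) = exp(-2πim) = 1`: this is what the choice of `ω₂` and `λ` achieves.
-/

open Filter Polynomial Topology

theorem Polynomial.derivative_hermite_succ (n : ℕ) :
    derivative (hermite (n + 1)) = (n + 1) • hermite n := by
  induction n with
  | zero => simp
  | succ n ih =>
    rw [hermite_succ (n + 1), derivative_sub, derivative_mul, derivative_X, one_mul, ih,
      derivative_smul, mul_smul_comm, add_sub_assoc, ← smul_sub, ← hermite_succ, succ_nsmul]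
    module

theorem Polynomial.aeval_hermite_add_two {R : Type*} [CommRing R] (k : ℕ) (x : R) :
    aeval x (hermite (k + 2)) = x * aeval x (hermite (k + 1)) - (k + 1) * aeval x (hermite k) := by
  rw [hermite_succ, derivative_hermite_succ, map_sub, map_mul, aeval_X, map_nsmul, nsmul_eq_mul]
  push_cast
  ring

theorem Polynomial.aeval_zero_hermite_of_odd {R : Type*} [CommRing R] {k : ℕ} (hk : Odd k) :
    aeval (0 : R) (hermite k) = 0 := by
  rw [aeval_def, eval₂_at_zero, coeff_hermite_of_odd_add (by simpa using hk), map_zero]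

theorem Polynomial.tendsto_eval_mul_exp_neg_sq_div_two_cocompact (p : ℝ[X]) :
    Tendsto (fun x => p.eval x * Real.exp (-x ^ 2 / 2)) (cocompact ℝ) (𝓝 0) := by
  induction p using Polynomial.induction_on' with
  | add p q hp hq => simpa [add_mul] using hp.add hq
  | monomial k a =>
    have h :=
      (tendsto_rpow_abs_mul_exp_neg_mul_sq_cocompact (a := 1 / 2) one_half_pos k).const_mul a
    rw [mul_zero] at h
    refine tendsto_zero_iff_norm_tendsto_zero.mpr ((tendsto_zero_iff_norm_tendsto_zero.mp h).congr
      fun x => ?_)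
    simp only [eval_monomial, norm_mul, Real.norm_eq_abs, abs_pow, Real.rpow_natCast, abs_abs]
    ring_nf

noncomputable def gaussHermite (k : ℕ) (x : ℝ) : ℝ := Real.exp (-x ^ 2 / 2) * aeval x (hermite k)

theorem hasDerivAt_gaussHermite (k : ℕ) (x : ℝ) :
    HasDerivAt (gaussHermite k) (-gaussHermite (k + 1) x) x := by
  have hgauss : HasDerivAt (fun y : ℝ => -y ^ 2 / 2) (-x) x :=
    ((hasDerivAt_pow 2 x).neg.div_const 2).congr_deriv (by norm_num; ring)
  refine (hgauss.exp.mul ((hermite k).hasDerivAt_aeval x)).congr_deriv ?_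
  rw [gaussHermite, hermite_succ, map_sub, map_mul, aeval_X]
  ring

theorem deriv_gaussHermite (k : ℕ) : deriv (gaussHermite k) = fun x => -gaussHermite (k + 1) x :=
  funext fun x => (hasDerivAt_gaussHermite k x).deriv

theorem differentiable_gaussHermite (k : ℕ) : Differentiable ℝ (gaussHermite k) :=
  fun x => (hasDerivAt_gaussHermite k x).differentiableAt

theorem differentiable_deriv_gaussHermite (k : ℕ) : Differentiable ℝ (deriv (gaussHermite k)) := by
  rw [deriv_gaussHermite]
  exact (differentiable_gaussHermite _).neg

theorem deriv_deriv_gaussHermite_add_mul_deriv (k : ℕ) (x : ℝ) :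
    deriv (deriv (gaussHermite k)) x + x * deriv (gaussHermite k) x
      = -(k + 1) * gaussHermite k x := by
  rw [deriv_gaussHermite, deriv.fun_neg', deriv_gaussHermite]
  simp only [gaussHermite, aeval_hermite_add_two]
  ring

theorem gaussHermite_apply_zero_of_odd {k : ℕ} (hk : Odd k) : gaussHermite k 0 = 0 := by
  rw [gaussHermite, aeval_zero_hermite_of_odd hk, mul_zero]

theorem tendsto_gaussHermite_cocompact (k : ℕ) :
    Tendsto (gaussHermite k) (cocompact ℝ) (𝓝 0) := by
  convert (hermite k).map (algebraMap ℤ ℝ) |>.tendsto_eval_mul_exp_neg_sq_div_two_cocompact using 2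
  rw [gaussHermite, eval_map_algebraMap, mul_comm]

theorem deriv_ofReal_mul_const {f : ℝ → ℝ} (hf : Differentiable ℝ f) (z : ℂ) :
    deriv (fun x => (f x : ℂ) * z) = fun x => ((deriv f x : ℝ) : ℂ) * z :=
  funext fun x => ((hf x).hasDerivAt.ofReal_comp.mul_const z).deriv

theorem separated_eigenfunction {R : ℝ → ℝ} {T : ℝ → ℂ} {c b : ℝ → ℝ} {κ : ℝ} {μ : ℂ}
    (hR : Differentiable ℝ R) (hR' : Differentiable ℝ (deriv R))
    (hRode : ∀ x, deriv (deriv R) x + x * deriv R x = -κ * R x)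
    (hT : Differentiable ℝ T) (hTode : ∀ s, b s * deriv T s = (μ + κ * c s) * T s) (η s : ℝ) :
    (c s : ℂ) * deriv (deriv fun x => (R x : ℂ) * T s) η
        + (c s : ℂ) * η * deriv (fun x => (R x : ℂ) * T s) η
        + (b s : ℂ) * deriv (fun u => (R η : ℂ) * T u) s = μ * ((R η : ℂ) * T s) := by
  have hRodeC := congrArg (fun r : ℝ => (r : ℂ)) (hRode η)
  push_cast at hRodeC
  rw [deriv_ofReal_mul_const hR, deriv_ofReal_mul_const hR', deriv_const_mul _ (hT s)]
  linear_combination (c s : ℂ) * T s * hRodeC + (R η : ℂ) * hTode s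

theorem hasDerivAt_cexp_integral {f g : ℝ → ℝ} (hf : Continuous f) (hg : Continuous g)
    (μ κ : ℂ) (s : ℝ) :
    HasDerivAt (fun u => Complex.exp (μ * ((∫ t in (0 : ℝ)..u, f t : ℝ) : ℂ)
        + κ * ((∫ t in (0 : ℝ)..u, g t : ℝ) : ℂ)))
      ((μ * f s + κ * g s) * Complex.exp (μ * ((∫ t in (0 : ℝ)..s, f t : ℝ) : ℂ)
        + κ * ((∫ t in (0 : ℝ)..s, g t : ℝ) : ℂ))) s := by
  have hF := (hf.integral_hasStrictDerivAt 0 s).hasDerivAt.ofReal_comp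
  have hG := (hg.integral_hasStrictDerivAt 0 s).hasDerivAt.ofReal_comp
  exact ((hF.const_mul μ).add (hG.const_mul κ)).cexp.congr_deriv (mul_comm _ _)

theorem mul_deriv_cexp_integral_div {b g : ℝ → ℝ} (hb : Continuous b) (hb₀ : ∀ s, b s ≠ 0)
    (hg : Continuous g) (μ κ : ℂ) (s : ℝ) :
    (b s : ℂ) * deriv (fun u => Complex.exp (μ * ((∫ t in (0 : ℝ)..u, 1 / b t : ℝ) : ℂ)
        + κ * ((∫ t in (0 : ℝ)..u, g t / b t : ℝ) : ℂ))) s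
      = (μ + κ * g s) * Complex.exp (μ * ((∫ t in (0 : ℝ)..s, 1 / b t : ℝ) : ℂ)
        + κ * ((∫ t in (0 : ℝ)..s, g t / b t : ℝ) : ℂ)) := by
  have hbs : (b s : ℂ) ≠ 0 := by exact_mod_cast hb₀ s
  have hinv : Continuous fun t => 1 / b t := continuous_const.div hb hb₀
  have hgb : Continuous fun t => g t / b t := hg.div hb hb₀
  rw [(hasDerivAt_cexp_integral hinv hgb μ κ s).deriv, ← mul_assoc]
  congr 1
  push_cast
  field_simp

theorem periodic_cexp_integral {f g : ℝ → ℝ} {S : ℝ} (hf : Continuous f)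
    (hg : Continuous g) (hfS : Function.Periodic f S) (hgS : Function.Periodic g S) {μ κ : ℂ}
    (hmonodromy : Complex.exp (μ * ((∫ t in (0 : ℝ)..S, f t : ℝ) : ℂ)
        + κ * ((∫ t in (0 : ℝ)..S, g t : ℝ) : ℂ)) = 1) :
    Function.Periodic (fun u => Complex.exp (μ * ((∫ t in (0 : ℝ)..u, f t : ℝ) : ℂ)
        + κ * ((∫ t in (0 : ℝ)..u, g t : ℝ) : ℂ))) S := by
  intro u
  have hF := hfS.intervalIntegral_add_eq_add 0 u fun _ _ => hf.intervalIntegrable _ _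
  have hG := hgS.intervalIntegral_add_eq_add 0 u fun _ _ => hg.intervalIntegrable _ _
  rw [zero_add] at hF hG
  dsimp only
  rw [hF, hG, Complex.ofReal_add, Complex.ofReal_add, mul_add, mul_add, add_add_add_comm,
    Complex.exp_add, hmonodromy, mul_one]

theorem cexp_neg_mul_add_eq_one {ω I₁ : ℝ} (hI₁ : I₁ ≠ 0) (hω : ω = 2 * Real.pi / I₁)
    (κ I₂ : ℝ) (m : ℤ) :
    Complex.exp (-(((κ * (ω / (2 * Real.pi)) * I₂ : ℝ) : ℂ) + Complex.I * m * ω) * I₁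
      + κ * I₂) = 1 := by
  have hωC : (ω : ℂ) * I₁ = 2 * Real.pi := by
    rw [hω, Complex.ofReal_div, div_mul_cancel₀ _ (by exact_mod_cast hI₁)]
    push_cast
    ring
  have hκ : κ * (ω / (2 * Real.pi)) * I₂ * I₁ = κ * I₂ := by
    rw [hω]
    field_simp
  have hκC : ((κ * (ω / (2 * Real.pi)) * I₂ : ℝ) : ℂ) * I₁ = κ * I₂ := by exact_mod_cast hκ
  rw [← Complex.exp_int_mul_two_pi_mul_I (-m), Int.cast_neg]
  congr 1
  linear_combination -hκC - Complex.I * m * hωC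

theorem boundary_layer_eigenfunction_general
    (S : ℝ) (hS : 0 < S)
    (σ ξ B : ℝ → ℝ)
    (hσcont : Continuous σ) (hξcont : Continuous ξ)
    (hBcont : Continuous B)
    (hσper : Function.Periodic σ S) (hξper : Function.Periodic ξ S)
    (hBper : Function.Periodic B S)
    (hB : ∀ s, 0 < B s)
    (n : ℕ) (hn : 0 < n) (m : ℤ)
    (ω₂ : ℝ) (hω₂ : ω₂ = 2 * Real.pi / ∫ s in (0:ℝ)..S, 1 / B s)
    (lam : ℂ)
    (hlam : lam = ((2 * (n : ℝ) * (ω₂ / (2 * Real.pi)) *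
        ∫ s in (0:ℝ)..S, σ s * ξ s ^ 2 / B s : ℝ) : ℂ) + Complex.I * (m : ℂ) * (ω₂ : ℂ))
    (Q : ℝ → ℝ → ℂ)
    (hQ : ∀ η s, Q η s =
        ((Real.exp (-η ^ 2 / 2) * Polynomial.aeval η (Polynomial.hermite (2 * n - 1)) : ℝ) : ℂ)
          * Complex.exp (-lam * ((∫ t in (0:ℝ)..s, 1 / B t : ℝ) : ℂ)
              + 2 * (n : ℂ) * ((∫ t in (0:ℝ)..s, σ t * ξ t ^ 2 / B t : ℝ) : ℂ))) :
    (∀ η s, ((σ s * ξ s ^ 2 : ℝ) : ℂ) * deriv (deriv (fun η' => Q η' s)) η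
        + ((σ s * ξ s ^ 2 : ℝ) : ℂ) * (η : ℂ) * deriv (fun η' => Q η' s) η
        + ((B s : ℝ) : ℂ) * deriv (fun s' => Q η s') s = -lam * Q η s) ∧
    (∀ s, Q 0 s = 0) ∧
    (∀ s, Tendsto (fun η => Q η s) atBot (nhds 0)) ∧
    (∀ η s, Q η (s + S) = Q η s) := by
  set T : ℝ → ℂ := fun u => Complex.exp (-lam * ((∫ t in (0:ℝ)..u, 1 / B t : ℝ) : ℂ)
      + 2 * (n : ℂ) * ((∫ t in (0:ℝ)..u, σ t * ξ t ^ 2 / B t : ℝ) : ℂ))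
  obtain rfl : Q = fun η s => (gaussHermite (2 * n - 1) η : ℂ) * T s := funext₂ hQ
  have hB₀ (s : ℝ) : B s ≠ 0 := (hB s).ne'
  have hBinv : Continuous fun t => 1 / B t := continuous_const.div hBcont hB₀
  have hσξ : Continuous fun t => σ t * ξ t ^ 2 := hσcont.mul (hξcont.pow 2)
  have hG : Continuous fun t => σ t * ξ t ^ 2 / B t := hσξ.div hBcont hB₀
  have hRode (x : ℝ) : deriv (deriv (gaussHermite (2 * n - 1))) x
      + x * deriv (gaussHermite (2 * n - 1)) x = -(2 * n : ℝ) * gaussHermite (2 * n - 1) x := by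
    rw [deriv_deriv_gaussHermite_add_mul_deriv, Nat.cast_sub (by omega)]
    push_cast
    ring
  have hTode (s : ℝ) : (B s : ℂ) * deriv T s
      = (-lam + ((2 * n : ℝ) : ℂ) * ((σ s * ξ s ^ 2 : ℝ) : ℂ)) * T s := by
    rw [mul_deriv_cexp_integral_div hBcont hB₀ hσξ]
    push_cast
    ring
  refine ⟨fun η s => ?_, fun s => ?_, fun s => ?_, fun η s => ?_⟩
  · beta_reduce
    exact separated_eigenfunction (differentiable_gaussHermite _)
      (differentiable_deriv_gaussHermite _) hRode
      (fun s => (hasDerivAt_cexp_integral hBinv hG (-lam) (2 * n) s).differentiableAt) hTode η s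
  · simp [gaussHermite_apply_zero_of_odd (⟨n - 1, by omega⟩ : Odd (2 * n - 1))]
  · simpa using ((Complex.continuous_ofReal.tendsto 0).comp
      ((tendsto_gaussHermite_cocompact _).mono_left atBot_le_cocompact)).mul_const (T s)
  · refine congrArg _ (periodic_cexp_integral hBinv hG
      (fun t => by simp only [hBper t]) (fun t => by simp only [hσper t, hξper t, hBper t]) ?_ s)
    have hI₁ : 0 < ∫ t in (0:ℝ)..S, 1 / B t :=
      intervalIntegral.intervalIntegral_pos_of_pos (hBinv.intervalIntegrable 0 S)
        (fun t => one_div_pos.mpr (hB t)) hS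
    simpa [hlam] using cexp_neg_mul_add_eq_one hI₁.ne' hω₂ (2 * n)
      (∫ t in (0:ℝ)..S, σ t * ξ t ^ 2 / B t) m

/-- The separated function
`Q̃(η,s) = exp(−η²/2) He_{2n−1}(η) · exp(−λ_{m,n}∫₀ˢ ds'/B + 2n∫₀ˢ σξ²/B)`
is a boundary-layer eigenfunction: it satisfies
`σξ²·Q̃_ηη + σξ²·η·Q̃_η + B·Q̃_s = −λ_{m,n}·Q̃`, vanishes at `η = 0`, decays as
`η → −∞`, and is `S`-periodic in `s`. -/
theorem boundary_layer_eigenfunction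
    (S : ℝ) (hS : 0 < S)
    (σ ξ a0 B : ℝ → ℝ)
    (hσcont : Continuous σ) (hξcont : Continuous ξ) (ha0cont : Continuous a0)
    (hBcont : Continuous B)
    (hσper : Function.Periodic σ S) (hξper : Function.Periodic ξ S)
    (ha0per : Function.Periodic a0 S) (hBper : Function.Periodic B S)
    (hB : ∀ s, 0 < B s) (hσ : ∀ s, 0 < σ s)
    (hξ : ContDiff ℝ 1 ξ)
    (hbern : ∀ s, B s * deriv ξ s + a0 s * ξ s - σ s * ξ s ^ 3 = 0)
    (n : ℕ) (hn : 0 < n) (m : ℤ)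
    (ω₂ : ℝ) (hω₂ : ω₂ = 2 * Real.pi / ∫ s in (0:ℝ)..S, 1 / B s)
    (lam : ℂ)
    (hlam : lam = ((2 * (n : ℝ) * (ω₂ / (2 * Real.pi)) *
        ∫ s in (0:ℝ)..S, σ s * ξ s ^ 2 / B s : ℝ) : ℂ) + Complex.I * (m : ℂ) * (ω₂ : ℂ))
    (Q : ℝ → ℝ → ℂ)
    (hQ : ∀ η s, Q η s =
        ((Real.exp (-η ^ 2 / 2) * Polynomial.aeval η (Polynomial.hermite (2 * n - 1)) : ℝ) : ℂ)
          * Complex.exp (-lam * ((∫ t in (0:ℝ)..s, 1 / B t : ℝ) : ℂ)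
              + 2 * (n : ℂ) * ((∫ t in (0:ℝ)..s, σ t * ξ t ^ 2 / B t : ℝ) : ℂ))) :
    (∀ η s, ((σ s * ξ s ^ 2 : ℝ) : ℂ) * deriv (deriv (fun η' => Q η' s)) η
        + ((σ s * ξ s ^ 2 : ℝ) : ℂ) * (η : ℂ) * deriv (fun η' => Q η' s) η
        + ((B s : ℝ) : ℂ) * deriv (fun s' => Q η s') s = -lam * Q η s) ∧
    (∀ s, Q 0 s = 0) ∧
    (∀ s, Tendsto (fun η => Q η s) atBot (nhds 0)) ∧
    (∀ η s, Q η (s + S) = Q η s) :=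
  boundary_layer_eigenfunction_general S hS σ ξ B hσcont hξcont hBcont hσper hξper hBper hB n hn m
    ω₂ hω₂ lam hlam Q hQ
end

section
/- Let S > 0 and let B, σ, a⁰ : ℝ → ℝ be continuous and S-periodic with B(s) > 0, σ(s) > 0 and a⁰(s) ≥ 0 for all s, and suppose ∫₀^S a⁰(s)/B(s) ds > 0. Then there exists a continuously differentiable, S-periodic function ξ : ℝ → ℝ with ξ(s) > 0 for all s satisfying the Bernoulli equation B(s)·ξ'(s) + a⁰(s)·ξ(s) − σ(s)·ξ(s)³ = 0 for all s. -/
/-!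
The substitution `η = ξ⁻²` turns the Bernoulli equation into the linear equation
`η' = p η - q` with `p = 2 a⁰ / B` and `q = 2 σ / B`. With `P` a primitive of `p` and
`A = ∫₀^S p > 0`, variation of constants gives the periodic solution
`η s = (1 - e^{-A})⁻¹ e^{P s} ∫_s^{s+S} q t e^{-P t} dt`: periodicity comes from
`P (s + S) = P s + A`, and `η > 0` because `q > 0`. Then `ξ = η^{-1/2}`.
-/

open Real intervalIntegral Function

lemma integral_add_add_eq_mul_of_add_eq_mul {h : ℝ → ℝ} {T c : ℝ}
    (hh : ∀ t, h (t + T) = c * h t) (a b : ℝ) :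
    ∫ t in a + T..b + T, h t = c * ∫ t in a..b, h t := by
  rw [← integral_comp_add_right, ← integral_const_mul]
  simp only [hh]

lemma hasDerivAt_integral_add_right {h : ℝ → ℝ} (hh : Continuous h) (T s : ℝ) :
    HasDerivAt (fun u => ∫ t in u..u + T, h t) (h (s + T) - h s) s := by
  have hF (u : ℝ) : HasDerivAt (fun v => ∫ t in 0..v, h t) (h u) u :=
    (hh.integral_hasStrictDerivAt 0 u).hasDerivAt
  have hdiff : (fun u => ∫ t in u..u + T, h t) =
      fun u => (∫ t in 0..u + T, h t) - ∫ t in 0..u, h t :=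
    funext fun u => (integral_interval_sub_left (hh.intervalIntegrable _ _)
      (hh.intervalIntegrable (μ := MeasureTheory.volume) _ _)).symm
  rw [hdiff]
  exact ((hF (s + T)).comp_add_const s T).sub (hF s)

lemma Function.Periodic.integral_zero_add {f : ℝ → ℝ} {T : ℝ} (hf : Periodic f T)
    (hfc : Continuous f) (s : ℝ) :
    ∫ t in 0..s + T, f t = (∫ t in 0..s, f t) + ∫ t in 0..T, f t := by
  simpa using hf.intervalIntegral_add_eq_add 0 s fun _ _ => hfc.intervalIntegrable _ _

noncomputable def periodicLinearSolution (S : ℝ) (p q : ℝ → ℝ) (s : ℝ) : ℝ :=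
  (1 - exp (-∫ t in 0..S, p t))⁻¹ * exp (∫ t in 0..s, p t) *
    ∫ t in s..s + S, q t * exp (-∫ u in 0..t, p u)

section periodicLinearSolution

variable {S : ℝ} {p q : ℝ → ℝ}

lemma periodicLinearSolution_weight_add (hp : Continuous p) (hpper : Periodic p S)
    (hqper : Periodic q S) (t : ℝ) :
    q (t + S) * exp (-∫ u in 0..t + S, p u) =
      exp (-∫ u in 0..S, p u) * (q t * exp (-∫ u in 0..t, p u)) := by
  rw [hpper.integral_zero_add hp, hqper, neg_add, exp_add]
  ring

lemma periodicLinearSolution_periodic (hp : Continuous p) (hpper : Periodic p S)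
    (hqper : Periodic q S) : Periodic (periodicLinearSolution S p q) S := by
  intro s
  have hw := periodicLinearSolution_weight_add hp hpper hqper
  rw [periodicLinearSolution, periodicLinearSolution, hpper.integral_zero_add hp,
    integral_add_add_eq_mul_of_add_eq_mul hw, exp_add]
  have : exp (∫ u in 0..S, p u) * exp (-∫ u in 0..S, p u) = 1 := by rw [← exp_add]; simp
  linear_combination (1 - exp (-∫ t in 0..S, p t))⁻¹ * exp (∫ t in 0..s, p t) *
    (∫ t in s..s + S, q t * exp (-∫ u in 0..t, p u)) * this

lemma periodicLinearSolution_pos (hS : 0 < S) (hp : Continuous p) (hq : Continuous q)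
    (hqpos : ∀ s, 0 < q s) (hpint : 0 < ∫ t in 0..S, p t) (s : ℝ) :
    0 < periodicLinearSolution S p q s := by
  have hk : 0 < 1 - exp (-∫ t in 0..S, p t) := by
    rw [sub_pos, exp_lt_one_iff]; linarith
  have hI : 0 < ∫ t in s..s + S, q t * exp (-∫ u in 0..t, p u) := by
    have hw : Continuous fun t => q t * exp (-∫ u in 0..t, p u) := by fun_prop
    exact intervalIntegral_pos_of_pos_on (hw.intervalIntegrable _ _)
      (fun t _ => mul_pos (hqpos t) (exp_pos _)) (by linarith)
  unfold periodicLinearSolution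
  positivity

lemma hasDerivAt_periodicLinearSolution (hp : Continuous p) (hq : Continuous q)
    (hpper : Periodic p S) (hqper : Periodic q S) (hA : ∫ t in 0..S, p t ≠ 0) (s : ℝ) :
    HasDerivAt (periodicLinearSolution S p q) (p s * periodicLinearSolution S p q s - q s) s := by
  have hP : HasDerivAt (fun u => ∫ t in 0..u, p t) (p s) s :=
    (hp.integral_hasStrictDerivAt 0 s).hasDerivAt
  have hw : Continuous fun t => q t * exp (-∫ u in 0..t, p u) := by fun_prop
  have hI := hasDerivAt_integral_add_right hw S s
  rw [periodicLinearSolution_weight_add hp hpper hqper] at hI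
  have hk : 1 - exp (-∫ t in 0..S, p t) ≠ 0 := by
    rw [sub_ne_zero, ne_comm, Ne, exp_eq_one_iff, neg_eq_zero]; exact hA
  have hexp : exp (∫ t in 0..s, p t) * exp (-∫ t in 0..s, p t) = 1 := by rw [← exp_add]; simp
  refine (((hasDerivAt_const s (1 - exp (-∫ t in 0..S, p t))⁻¹).mul hP.exp).mul hI).congr_deriv ?_
  simp only [periodicLinearSolution, Pi.mul_apply]
  field_simp
  linear_combination (exp (-∫ t in 0..S, p t) - 1) * q s * hexp

end periodicLinearSolution

lemma bernoulli_of_hasDerivAt_linear {η : ℝ → ℝ} {b a c s : ℝ} (hb : b ≠ 0) (hη : 0 < η s)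
    (hd : HasDerivAt η (2 * (a / b) * η s - 2 * (c / b)) s) :
    b * deriv (fun u => (√(η u))⁻¹) s + a * (√(η s))⁻¹ - c * (√(η s))⁻¹ ^ 3 = 0 := by
  have hr : 0 < √(η s) := sqrt_pos.2 hη
  have hξ : HasDerivAt (fun u => (√(η u))⁻¹) _ s := (hd.sqrt hη.ne').inv hr.ne'
  rw [hξ.deriv]
  have hsq : √(η s) ^ 2 = η s := sq_sqrt hη.le
  field_simp
  rw [hsq]
  ring

theorem exists_periodic_bernoulli_solution_general
    (S : ℝ) (hS : 0 < S)
    (B σ a0 : ℝ → ℝ)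
    (hBcont : Continuous B) (hσcont : Continuous σ) (ha0cont : Continuous a0)
    (hBper : Function.Periodic B S) (hσper : Function.Periodic σ S)
    (ha0per : Function.Periodic a0 S)
    (hBpos : ∀ s, 0 < B s) (hσpos : ∀ s, 0 < σ s)
    (hint : 0 < ∫ s in (0:ℝ)..S, a0 s / B s) :
    ∃ ξ : ℝ → ℝ, ContDiff ℝ 1 ξ ∧ Function.Periodic ξ S ∧ (∀ s, 0 < ξ s) ∧
      ∀ s, B s * deriv ξ s + a0 s * ξ s - σ s * ξ s ^ 3 = 0 := by
  have hBne (s : ℝ) : B s ≠ 0 := (hBpos s).ne'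
  set p : ℝ → ℝ := fun s => 2 * (a0 s / B s)
  set q : ℝ → ℝ := fun s => 2 * (σ s / B s)
  have hp : Continuous p := continuous_const.mul (ha0cont.div hBcont hBne)
  have hq : Continuous q := continuous_const.mul (hσcont.div hBcont hBne)
  have hpper : Periodic p S := fun s => by simp only [p, ha0per s, hBper s]
  have hqper : Periodic q S := fun s => by simp only [q, hσper s, hBper s]
  have hpint : 0 < ∫ t in 0..S, p t := by
    simp only [p, integral_const_mul]
    positivity
  set η := periodicLinearSolution S p q
  have hη' := hasDerivAt_periodicLinearSolution hp hq hpper hqper hpint.ne'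
  have hηpos := periodicLinearSolution_pos hS hp hq
    (fun s => mul_pos two_pos (div_pos (hσpos s) (hBpos s))) hpint
  have hsqrt (s : ℝ) : 0 < √(η s) := sqrt_pos.2 (hηpos s)
  have hη : ContDiff ℝ 1 η := by
    refine contDiff_one_iff_deriv.2 ⟨fun s => (hη' s).differentiableAt, ?_⟩
    rw [funext fun s => (hη' s).deriv]
    exact (hp.mul (continuous_iff_continuousAt.2 fun s => (hη' s).continuousAt)).sub hq
  refine ⟨fun s => (√(η s))⁻¹, (hη.sqrt fun s => (hηpos s).ne').inv fun s => (hsqrt s).ne',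
    (periodicLinearSolution_periodic hp hpper hqper).comp fun x => (√x)⁻¹,
    fun s => inv_pos.2 (hsqrt s),
    fun s => bernoulli_of_hasDerivAt_linear (hBne s) (hηpos s) (hη' s)⟩

/-- Existence of the positive `S`-periodic solution of the Bernoulli
equation `Bξ' + a⁰ξ − σξ³ = 0`, given `B > 0`, `σ > 0`, `a⁰ ≥ 0` continuous and
`S`-periodic with `∫₀^S a⁰/B > 0`. -/
theorem exists_periodic_bernoulli_solution
    (S : ℝ) (hS : 0 < S)
    (B σ a0 : ℝ → ℝ)
    (hBcont : Continuous B) (hσcont : Continuous σ) (ha0cont : Continuous a0)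
    (hBper : Function.Periodic B S) (hσper : Function.Periodic σ S)
    (ha0per : Function.Periodic a0 S)
    (hBpos : ∀ s, 0 < B s) (hσpos : ∀ s, 0 < σ s) (ha0nonneg : ∀ s, 0 ≤ a0 s)
    (hint : 0 < ∫ s in (0:ℝ)..S, a0 s / B s) :
    ∃ ξ : ℝ → ℝ, ContDiff ℝ 1 ξ ∧ Function.Periodic ξ S ∧ (∀ s, 0 < ξ s) ∧
      ∀ s, B s * deriv ξ s + a0 s * ξ s - σ s * ξ s ^ 3 = 0 :=
  exists_periodic_bernoulli_solution_general S hS B σ a0 hBcont hσcont ha0cont hBper hσper ha0per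
    hBpos hσpos hint
end
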